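/- arXiv:1907.08691 — 2 statements merged into one kernel-verified Lean document; each statement's English description precedes it below -/
import Mathlib

section
/- Let p ≥ 5 and let r̄ : G → GSp_4(F_p) be a surjective group homomorphism from a group G, together with a homomorphism ε : G → F_pˣ such that ν ∘ r̄ = ε^m for some integer m (ν the similitude character). Then there exists σ ∈ G with ε(σ) ≢ 1 mod p such that no two eigenvalues of r̄(σ) have ratio equal to ε(σ) in F̄_p. -/
open Matrix
open Polynomial

/-- The antisymmetric matrix `J` defining `GSp₄`. -/
def Jmat (R : Type) [CommRing R] : Matrix (Fin 4) (Fin 4) R :=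
  !![0, 0, 0, 1; 0, 0, 1, 0; 0, -1, 0, 0; -1, 0, 0, 0]

/-- **Neatness.**  Let `p ≥ 5`, let `G₄ = GSp₄(𝔽_p)` (the subgroup of
`GL₄(𝔽_p)` cut out by the similitude condition, with similitude character `ν : G₄ → 𝔽_pˣ`),
and let `r̄ : G → G₄` be a surjective group homomorphism together with `ε : G → 𝔽_pˣ` such
that `ν ∘ r̄ = ε^m` for some integer `m`.  Then there exists `σ ∈ G` with `ε(σ) ≠ 1` such
that no two eigenvalues of `r̄(σ)` (i.e. roots of its characteristic polynomial over the
algebraic closure `𝔽̄_p`) have ratio equal to `ε(σ)`. -/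
theorem gsp4_neatness
    (p : ℕ) [Fact p.Prime] (hp : 5 ≤ p)
    (G4 : Subgroup (GL (Fin 4) (ZMod p)))
    (hG4 : ∀ M : GL (Fin 4) (ZMod p),
      M ∈ G4 ↔ ∃ c : (ZMod p)ˣ,
        ((M : Matrix (Fin 4) (Fin 4) (ZMod p)))ᵀ * Jmat (ZMod p) *
            (M : Matrix (Fin 4) (Fin 4) (ZMod p))
          = ((c : ZMod p)) • Jmat (ZMod p))
    (ν : G4 →* (ZMod p)ˣ)
    (hν : ∀ M : G4,
      (((M : GL (Fin 4) (ZMod p)) : Matrix (Fin 4) (Fin 4) (ZMod p)))ᵀ * Jmat (ZMod p) *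
          ((M : GL (Fin 4) (ZMod p)) : Matrix (Fin 4) (Fin 4) (ZMod p))
        = (((ν M : (ZMod p)ˣ) : ZMod p)) • Jmat (ZMod p))
    (G : Type) [Group G] (r : G →* G4) (hr : Function.Surjective r)
    (ε : G →* (ZMod p)ˣ) (m : ℤ) (hsim : ∀ g : G, ν (r g) = ε g ^ m) :
    ∃ σ : G, ε σ ≠ 1 ∧
      ∀ μ₁ ∈ ((((r σ : G4) : GL (Fin 4) (ZMod p)) : Matrix (Fin 4) (Fin 4) (ZMod p)).charpoly.map
          (algebraMap (ZMod p) (AlgebraicClosure (ZMod p)))).roots,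
      ∀ μ₂ ∈ ((((r σ : G4) : GL (Fin 4) (ZMod p)) : Matrix (Fin 4) (Fin 4) (ZMod p)).charpoly.map
          (algebraMap (ZMod p) (AlgebraicClosure (ZMod p)))).roots,
        μ₁ ≠ algebraMap (ZMod p) (AlgebraicClosure (ZMod p)) ((ε σ : (ZMod p)ˣ) : ZMod p) * μ₂ := by
  -- find λ with λ² ≠ 1
  obtain ⟨lam, hlam⟩ := IsCyclic.exists_ofOrder_eq_natCard (α := (ZMod p)ˣ)
  have hcard : Nat.card (ZMod p)ˣ = p - 1 := by
    simp [Nat.card_eq_fintype_card, ZMod.card_units_eq_totient,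
      Nat.totient_prime (Fact.out : p.Prime)]
  have hlam2 : lam ^ 2 ≠ 1 := by
    intro h
    have h2 : orderOf lam ∣ 2 := orderOf_dvd_of_pow_eq_one h
    rw [hlam, hcard] at h2
    have := Nat.le_of_dvd (by norm_num) h2
    omega
  -- the scalar matrix as a unit
  set U : GL (Fin 4) (ZMod p) :=
    Units.map (algebraMap (ZMod p) (Matrix (Fin 4) (Fin 4) (ZMod p))).toMonoidHom lam with hU
  have hUcoe : (U : Matrix (Fin 4) (Fin 4) (ZMod p)) = (lam : ZMod p) • 1 := by
    simp [hU, Algebra.algebraMap_eq_smul_one]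
  have hprod : (U : Matrix (Fin 4) (Fin 4) (ZMod p))ᵀ * Jmat (ZMod p) *
      (U : Matrix (Fin 4) (Fin 4) (ZMod p)) = ((lam ^ 2 : (ZMod p)ˣ) : ZMod p) • Jmat (ZMod p) := by
    rw [hUcoe]
    rw [transpose_smul, transpose_one, smul_mul_assoc, one_mul, mul_smul_comm, mul_one,
      smul_smul]
    push_cast
    rw [sq]
  have hUm : U ∈ G4 := (hG4 U).2 ⟨lam ^ 2, hprod⟩
  obtain ⟨σ, hσ⟩ := hr ⟨U, hUm⟩
  -- value of ν
  have hνU : ((ν ⟨U, hUm⟩ : (ZMod p)ˣ) : ZMod p) = ((lam ^ 2 : (ZMod p)ˣ) : ZMod p) := by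
    have h1 := hν ⟨U, hUm⟩
    rw [hprod] at h1
    have := congrFun (congrFun h1.symm 0) 3
    simpa [Jmat] using this
  have hνU' : ν ⟨U, hUm⟩ = lam ^ 2 := Units.ext hνU
  have hεσ : ε σ ≠ 1 := by
    intro h
    have := hsim σ
    rw [hσ, hνU', h] at this
    simp only [_root_.one_zpow] at this
    exact hlam2 this
  refine ⟨σ, hεσ, ?_⟩
  -- charpoly computation
  have hdiag : (U : Matrix (Fin 4) (Fin 4) (ZMod p)) =
      Matrix.diagonal (fun _ => (lam : ZMod p)) := by
    rw [hUcoe, smul_one_eq_diagonal]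
  have hcp : (U : Matrix (Fin 4) (Fin 4) (ZMod p)).charpoly = (X - C (lam : ZMod p)) ^ 4 := by
    rw [hdiag]
    have hcm : charmatrix (Matrix.diagonal (fun _ : Fin 4 => (lam : ZMod p)))
        = Matrix.diagonal (fun _ => (X : (ZMod p)[X]) - C (lam : ZMod p)) := by
      ext i j
      rcases eq_or_ne i j with rfl | h
      · simp [charmatrix_apply_eq]
      · simp [charmatrix_apply_ne _ _ _ h, Matrix.diagonal_apply_ne _ h]
    rw [Matrix.charpoly, hcm, det_diagonal]
    simp [Finset.prod_const]
  set F := AlgebraicClosure (ZMod p)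
  set lamb : F := algebraMap (ZMod p) F (lam : ZMod p) with hlamb
  intro μ₁ hμ₁ μ₂ hμ₂ heq
  have hroot : ∀ μ : F, μ ∈ ((((r σ : G4) : GL (Fin 4) (ZMod p)) :
      Matrix (Fin 4) (Fin 4) (ZMod p)).charpoly.map (algebraMap (ZMod p) F)).roots → μ = lamb := by
    intro μ hμ
    rw [hσ] at hμ
    simp only [hcp, Polynomial.map_pow, Polynomial.map_sub, Polynomial.map_X,
      Polynomial.map_C, roots_pow, roots_X_sub_C] at hμ
    exact Multiset.mem_singleton.mp (Multiset.mem_nsmul.mp hμ).2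
  have h1 := hroot μ₁ hμ₁
  have h2 := hroot μ₂ hμ₂
  subst h1 h2
  have hlne : lamb ≠ 0 :=
    (map_ne_zero_iff _ (algebraMap (ZMod p) F).injective).mpr lam.ne_zero
  have : algebraMap (ZMod p) F ((ε σ : (ZMod p)ˣ) : ZMod p) = 1 :=
    mul_right_cancel₀ hlne (by rw [one_mul]; exact heq.symm)
  have : ((ε σ : (ZMod p)ˣ) : ZMod p) = 1 := by
    apply (algebraMap (ZMod p) F).injective
    rw [_root_.map_one]
    exact this
  exact hεσ (Units.ext this)
end

section
/- Let k be a field, α, β ∈ kˣ with αβ ≠ 0 and (αβ)² ≠ 1. Let M be a k-vector space with endomorphisms Q₂, Z₂, X₂ such that Q₂ = Z₂ + X₂ on M, Q₂ - αβ is nilpotent on M, Z₂ X₂ = 0, and X₂³ = X₂. Then Z₂ is injective on M. (Proof sketch: if Z₂F = 0 then Q₂F = X₂F, Q₂²F = X₂²F, Q₂³F = X₂³F = X₂F = Q₂F, so Q₂ has an eigenvalue λ with λ³ = λ on the span; since Q₂ is invertible with unique generalized eigenvalue αβ, this forces (αβ)² = 1, a contradiction unless F = 0.) -/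
/-- Let `k` be a field, `α, β ∈ k` with `αβ ≠ 0` and `(αβ)² ≠ 1`.
Let `M` be a `k`-vector space with endomorphisms `Q₂, Z₂, X₂` such that `Q₂ = Z₂ + X₂`,
`Q₂ - αβ` is nilpotent on `M`, `Z₂ ∘ X₂ = 0` and `X₂³ = X₂`.  Then `Z₂` is injective
on `M`. -/
theorem Z2_injective
    (k M : Type) [Field k] [AddCommGroup M] [Module k M]
    (α β : k) (hαβ : α * β ≠ 0) (h1 : (α * β) ^ 2 ≠ 1)
    (Q₂ Z₂ X₂ : M →ₗ[k] M)
    (hsum : Q₂ = Z₂ + X₂)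
    (hnil : ∃ N : ℕ, ((Q₂ - (α * β) • LinearMap.id : Module.End k M)) ^ N = 0)
    (hZX : Z₂ ∘ₗ X₂ = 0)
    (hX3 : X₂ ∘ₗ X₂ ∘ₗ X₂ = X₂) :
    Function.Injective Z₂ := by
  obtain ⟨N, hN⟩ := hnil
  -- Q₂ - c•1 is a unit for all c ≠ αβ
  have hunit : ∀ c : k, c ≠ α * β → IsUnit (Q₂ - c • (1 : Module.End k M)) := by
    intro c hc
    have hdecomp : Q₂ - c • (1 : Module.End k M)
        = (Q₂ - (α * β) • (1 : Module.End k M)) + (α * β - c) • (1 : Module.End k M) := by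
      module
    rw [hdecomp]
    have hnilp : IsNilpotent (Q₂ - (α * β) • (1 : Module.End k M)) := by
      refine ⟨N, ?_⟩
      simpa [Module.End.one_eq_id] using hN
    have hu : IsUnit ((α * β - c) • (1 : Module.End k M)) := by
      rw [← Algebra.algebraMap_eq_smul_one]
      exact (isUnit_iff_ne_zero.mpr (sub_ne_zero.mpr (Ne.symm hc))).map (algebraMap k _)
    have hcomm : Commute (Q₂ - (α * β) • (1 : Module.End k M))
        ((α * β - c) • (1 : Module.End k M)) := by
      simp [Commute, SemiconjBy, mul_smul_comm, smul_mul_assoc]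
    exact hnilp.isUnit_add_right_of_commute hu hcomm
  rw [injective_iff_map_eq_zero]
  intro F hF
  have hQF : Q₂ F = X₂ F := by simp [hsum, hF]
  have hZXF : Z₂ (X₂ F) = 0 := by
    have := congrFun (congrArg DFunLike.coe hZX) F
    simpa using this
  have hQ2 : Q₂ (Q₂ F) = X₂ (X₂ F) := by
    rw [hQF, hsum]; simp [hZXF]
  have hZX2F : Z₂ (X₂ (X₂ F)) = 0 := by
    have := congrFun (congrArg DFunLike.coe hZX) (X₂ F)
    simpa using this
  have hQ3 : Q₂ (Q₂ (Q₂ F)) = Q₂ F := by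
    rw [hQ2, hsum]
    have hX3F : X₂ (X₂ (X₂ F)) = X₂ F := by
      have := congrFun (congrArg DFunLike.coe hX3) F
      simpa using this
    simp [hZX2F, hX3F, hQF, hF]
  -- the product endomorphism
  set P : Module.End k M := Q₂ * (Q₂ - 1) * (Q₂ + 1) with hP
  have hPF : P F = 0 := by
    have hPeq : P = Q₂ * Q₂ * Q₂ - Q₂ := by rw [hP]; noncomm_ring
    rw [hPeq]
    simp only [LinearMap.sub_apply, Module.End.mul_apply]
    rw [hQ3, sub_self]
  have hPunit : IsUnit P := by
    refine ((?_ : IsUnit Q₂).mul ?_).mul ?_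
    · have := hunit 0 (Ne.symm hαβ)
      simpa using this
    · have := hunit 1 fun h => h1 (by rw [← h]; ring)
      simpa using this
    · have := hunit (-1) fun h => h1 (by rw [← h]; ring)
      simpa [sub_neg_eq_add] using this
  have hinj := (Module.End.isUnit_iff P).mp hPunit |>.injective
  have : P F = P 0 := by simpa using hPF
  exact hinj this
end
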